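/- Let c be an admissible coefficient function satisfying (Cubic values). Let i_1 ≠ i_2 and let γ = e_{i_1,j_1}+e_{i_1,j_1′}+e_{i_1,j_1″}+e_{i_2,j_2} ∈ ℤ^{μ_A−2}. If a_{i_1} ≥ 3, a_{i_2} ≥ 3, j_1′ ≥ 2 and j_2 ≥ 2, then c(γ,0) = 0. -/

import Mathlib

/- Common framework: Frobenius manifolds for orbifold projective lines ℙ¹_A,
   following Ishibashi–Shiraishi–Takahashi. -/

namespace FrobeniusUniqueness

/-- A point index `(i, j)` labelling a flat coordinate `t_{i,j}`. -/
abbrev Pt : Type := Fin 3 × ℕ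

/-- A non-negative element of `ℤ^{μ_A − 2}`: an exponent vector `α` with `α_{i,j} ∈ ℕ`. -/
abbrev Expv : Type := Pt →₀ ℕ

/-- The standard basis vector `e_{i,j}`. -/
noncomputable def e (i : Fin 3) (j : ℕ) : Expv := Finsupp.single (i, j) 1

/-- The length `|α|` of an exponent vector. -/
def len (α : Expv) : ℕ := α.sum fun _ n => n

/-- A point index `(i,j)` is valid if `1 ≤ j ≤ a_i − 1`. -/
def ValidPt (A : Fin 3 → ℕ) (p : Pt) : Prop := 1 ≤ p.2 ∧ p.2 ≤ A p.1 - 1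

/-- An exponent vector lies in `ℤ^{μ_A − 2}` iff it is supported on valid indices. -/
def Valid (A : Fin 3 → ℕ) (α : Expv) : Prop := ∀ p ∈ α.support, ValidPt A p

/-- The combinatorial factor `s_{a,b,c}`. -/
def sFactor (a b c : ℕ) : ℂ :=
  if a = b ∧ b = c then 6
  else if a ≠ b ∧ b ≠ c ∧ a ≠ c then 1
  else 2

/-- The index type for the flat coordinates `t_1`, `t_{i,j}`, `t_{μ_A}`. -/
inductive Idx : Type where
  | one : Idx
  | pt : Fin 3 → ℕ → Idx
  | mu : Idx
deriving DecidableEq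

/-- Validity of a flat coordinate index. -/
def ValidIdx (A : Fin 3 → ℕ) : Idx → Prop
  | .one => True
  | .pt i j => ValidPt A (i, j)
  | .mu => True

/-- The metric `η` in the frame `∂_1, ∂_{i,j}, ∂_{μ_A}`. -/
noncomputable def eta (A : Fin 3 → ℕ) : Idx → Idx → ℂ
  | .one, .mu => 1
  | .mu, .one => 1
  | .pt i j, .pt i' j' =>
      if i = i' ∧ j + j' = A i ∧ 1 ≤ j ∧ j ≤ A i - 1 then (A i : ℂ)⁻¹ else 0
  | _, _ => 0

/-- The point indices occurring in an `Idx`. -/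
def ptsOf : Idx → List Pt
  | .pt i j => [(i, j)]
  | _ => []

/-- The number of occurrences of `μ_A` in an `Idx`. -/
def muCount : Idx → ℕ
  | .mu => 1
  | _ => 0

/-- The factor produced when the monomial `t^{β + Σ_{p ∈ ps} e_p}` is differentiated by
`∏_{p ∈ ps} ∂_p`, leaving the monomial `t^β`. -/
noncomputable def dfac (β : Expv) : List Pt → ℕ
  | [] => 1
  | p :: ps =>
      ((β + ((ps.map fun q => (Finsupp.single q 1 : Expv)).sum) + Finsupp.single p 1 : Expv) p)
        * dfac β ps

/-- `der A c a b d β m` is the coefficient of `t^β · e^{m·t_{μ_A}}` in `∂_a ∂_b ∂_d F`, where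
`F = (1/2)t_1²t_{μ_A} + (1/2)t_1·Σ_{i,j}(1/a_i)t_{i,j}t_{i,a_i−j} + Σ_{α,m} c(α,m)t^α e^{m t_{μ_A}}`
is the potential of the coefficient function `c`.  In particular `∂_1∂_a∂_b F = η(∂_a,∂_b)`. -/
noncomputable def der (A : Fin 3 → ℕ) (c : Expv → ℕ → ℂ) (a b d : Idx) (β : Expv) (m : ℕ) : ℂ :=
  if a = .one then (if β = 0 ∧ m = 0 then eta A b d else 0)
  else if b = .one then (if β = 0 ∧ m = 0 then eta A a d else 0)
  else if d = .one then (if β = 0 ∧ m = 0 then eta A a b else 0)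
  else
    (m : ℂ) ^ (muCount a + muCount b + muCount d) *
      (dfac β (ptsOf a ++ ptsOf b ++ ptsOf d) : ℂ) *
      c (β + (((ptsOf a ++ ptsOf b ++ ptsOf d).map fun q => (Finsupp.single q 1 : Expv)).sum)) m

/-- The coefficient of `t^β · e^{m·t_{μ_A}}` in
`Σ_{σ,τ} ∂_a∂_b∂_σF · η^{στ} · ∂_τ∂_d∂_e F`, where `(η^{στ})` is the inverse matrix of
`(η_{στ})` (so the only nonzero entries are `η^{1,μ_A} = η^{μ_A,1} = 1` and
`η^{(i,j),(i,a_i−j)} = a_i`). -/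
noncomputable def quadTerm (A : Fin 3 → ℕ) (c : Expv → ℕ → ℂ) (a b d e' : Idx)
    (β : Expv) (m : ℕ) : ℂ :=
  ∑ x ∈ Finset.HasAntidiagonal.antidiagonal β, ∑ y ∈ Finset.HasAntidiagonal.antidiagonal m,
    (der A c a b .one x.1 y.1 * der A c .mu d e' x.2 y.2
     + der A c a b .mu x.1 y.1 * der A c .one d e' x.2 y.2
     + ∑ i : Fin 3, ∑ j ∈ Finset.Icc 1 (A i - 1),
         (A i : ℂ) * der A c a b (.pt i j) x.1 y.1 * der A c (.pt i (A i - j)) d e' x.2 y.2)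

/-- `χ_A = 1/a_1 + 1/a_2 + 1/a_3 − 1`. -/
noncomputable def chi (A : Fin 3 → ℕ) : ℚ := (A 0 : ℚ)⁻¹ + (A 1 : ℚ)⁻¹ + (A 2 : ℚ)⁻¹ - 1

/-- The degree of the monomial `t^α`: `Σ_{i,j} α_{i,j}·(a_i − j)/a_i`. -/
noncomputable def deg (A : Fin 3 → ℕ) (α : Expv) : ℚ :=
  α.sum fun p n => (n : ℚ) * (((A p.1 : ℚ) - (p.2 : ℚ)) / (A p.1 : ℚ))

/-- A coefficient function is admissible if it satisfies (Homogeneity) and the WDVV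
equations (coefficientwise, in the variables `t_{i,j}` and `e^{t_{μ_A}}`). -/
structure IsAdmissible (A : Fin 3 → ℕ) (c : Expv → ℕ → ℂ) : Prop where
  homog : ∀ α : Expv, Valid A α → ∀ m : ℕ, c α m ≠ 0 → deg A α + (m : ℚ) * chi A = 2
  wdvv : ∀ a b d e' : Idx, ValidIdx A a → ValidIdx A b → ValidIdx A d → ValidIdx A e' →
      ∀ β : Expv, Valid A β → ∀ m : ℕ,
        quadTerm A c a b d e' β m = quadTerm A c a d b e' β m

/-- (Cubic values). -/
def CubicValues (A : Fin 3 → ℕ) (c : Expv → ℕ → ℂ) : Prop :=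
  (∀ (i₁ i₂ i₃ : Fin 3) (j₁ j₂ j₃ : ℕ),
      ValidPt A (i₁, j₁) → ValidPt A (i₂, j₂) → ValidPt A (i₃, j₃) →
      ¬(i₁ = i₂ ∧ i₂ = i₃) → c (e i₁ j₁ + e i₂ j₂ + e i₃ j₃) 0 = 0) ∧
  (∀ (i : Fin 3) (j₁ j₂ j₃ : ℕ),
      ValidPt A (i, j₁) → ValidPt A (i, j₂) → ValidPt A (i, j₃) →
      sFactor j₁ j₂ j₃ * c (e i j₁ + e i j₂ + e i j₃) 0 =
        if j₁ + j₂ + j₃ = A i then (A i : ℂ)⁻¹ else 0)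

/-- (Normalization). -/
def Normalization (A : Fin 3 → ℕ) (c : Expv → ℕ → ℂ) : Prop :=
  (2 ≤ A 0 → c (e 0 1 + e 1 1 + e 2 1) 1 = 1) ∧
  (A 0 = 1 → A 0 < A 1 → c (e 1 1 + e 2 1) 1 = 1) ∧
  (A 0 = 1 → A 1 = 1 → A 1 < A 2 → c (e 2 1) 1 = 1) ∧
  (A 0 = 1 → A 1 = 1 → A 2 = 1 → c 0 1 = 1)

/-- (Separation). -/
def Separation (A : Fin 3 → ℕ) (c : Expv → ℕ → ℂ) : Prop :=
  ∀ γ : Expv, Valid A γ →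
    ∀ (i₁ i₂ : Fin 3) (j₁ j₂ : ℕ), i₁ ≠ i₂ → ValidPt A (i₁, j₁) → ValidPt A (i₂, j₂) →
      e i₁ j₁ + e i₂ j₂ ≤ γ → c γ 0 = 0

/-- The automorphism of `ℤ^{μ_A−2}` exchanging `e_{i₁,j}` and `e_{i₂,j}` for all `j`. -/
def swapExp (i₁ i₂ : Fin 3) (α : Expv) : Expv :=
  Finsupp.equivMapDomain ((Equiv.swap i₁ i₂).prodCongr (Equiv.refl ℕ)) α

/-- (Symmetry). -/
def Symmetry (A : Fin 3 → ℕ) (c : Expv → ℕ → ℂ) : Prop :=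
  ∀ i₁ i₂ : Fin 3, A i₁ = A i₂ → ∀ α : Expv, Valid A α → ∀ m : ℕ,
    c (swapExp i₁ i₂ α) m = c α m

/-!
Write `[x, y, z | p]` for `c(e_{i₁,x} + e_{i₁,y} + e_{i₁,z} + e_{i₂,p}, 0)`. At the monomial
`t^{e_{i,j}}`, a WDVV equation between four fields `∂_{i,j}` involves only cubic values, which
(Cubic values) fixes, and such quartic coefficients. The equation for
`(∂_{i₂,1}, ∂_{i₂,p-1}, ∂_{i₁,x}, ∂_{i₁,y})` kills `[x, y, z | p]` as soon as `x + y ≥ a_{i₁}`, and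
the one for `(∂_{i₁,1}, ∂_{i₁,z-1}, ∂_{i₁,x}, ∂_{i₂,p})` gives `[x, y, z | p] = [x+1, y, z-1 | p]`.
Since `p < a_{i₂}`, homogeneity forces `x + y + z > a_{i₁}` for a nonzero `[x, y, z | p]`, so while
`x + y < a_{i₁}` the second move applies with `z ≥ 2`; induction on `z` ends in the first case.
-/

section Coefficients

variable {A : Fin 3 → ℕ} {c : Expv → ℕ → ℂ}

lemma ValidPt.lt {i : Fin 3} {j : ℕ} (h : ValidPt A (i, j)) : j < A i := by
  have h₂ : j ≤ A i - 1 := h.2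
  have := h.1
  omega

lemma valid_e {i : Fin 3} {j : ℕ} (h : ValidPt A (i, j)) : Valid A (e i j) :=
  fun p hp => by rwa [Finset.mem_singleton.1 (Finsupp.support_single_subset hp)]

lemma Valid.add {α β : Expv} (hα : Valid A α) (hβ : Valid A β) : Valid A (α + β) :=
  fun p hp => (Finset.mem_union.1 (Finsupp.support_add hp)).elim (hα p) (hβ p)

lemma deg_add (α β : Expv) : deg A (α + β) = deg A α + deg A β :=
  Finsupp.sum_add_index' (fun _ => by simp) (fun _ _ _ => by push_cast; ring)

lemma deg_e (i : Fin 3) (j : ℕ) : deg A (e i j) = ((A i : ℚ) - j) / A i := by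
  simp [deg, e]

lemma dfac_pos (β : Expv) (l : List Pt) : 0 < dfac β l := by
  induction l with
  | nil => simp [dfac]
  | cons p ps ih =>
    refine Nat.mul_pos ?_ ih
    simp [Finsupp.add_apply]

lemma dfac_zero_triple (g : Fin 3) (u₁ u₂ u₃ : ℕ) :
    (dfac 0 [(g, u₁), (g, u₂), (g, u₃)] : ℂ) = sFactor u₁ u₂ u₃ := by
  by_cases h₁₂ : u₁ = u₂ <;> by_cases h₂₃ : u₂ = u₃ <;> by_cases h₁₃ : u₁ = u₃ <;>
    simp [dfac, sFactor, h₁₂, h₂₃, h₁₃, eq_comm]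

lemma der_pt_pt_pt (g₁ g₂ g₃ : Fin 3) (u₁ u₂ u₃ : ℕ) (β : Expv) :
    der A c (.pt g₁ u₁) (.pt g₂ u₂) (.pt g₃ u₃) β 0 =
      dfac β [(g₁, u₁), (g₂, u₂), (g₃, u₃)] * c (β + e g₁ u₁ + e g₂ u₂ + e g₃ u₃) 0 := by
  simp [der, muCount, ptsOf, e, add_assoc]

lemma der_mu_pt_pt (g₁ g₂ : Fin 3) (u₁ u₂ : ℕ) (β : Expv) :
    der A c .mu (.pt g₁ u₁) (.pt g₂ u₂) β 0 = 0 := by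
  simp [der, muCount]

lemma der_pt_pt_mu (g₁ g₂ : Fin 3) (u₁ u₂ : ℕ) (β : Expv) :
    der A c (.pt g₁ u₁) (.pt g₂ u₂) .mu β 0 = 0 := by
  simp [der, muCount]

lemma der_pt_pt_pt_zero (hcub : CubicValues A c) {g₁ g₂ g₃ : Fin 3} {u₁ u₂ u₃ : ℕ}
    (h₁ : ValidPt A (g₁, u₁)) (h₂ : ValidPt A (g₂, u₂)) (h₃ : ValidPt A (g₃, u₃)) :
    der A c (.pt g₁ u₁) (.pt g₂ u₂) (.pt g₃ u₃) 0 0 =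
      if g₁ = g₂ ∧ g₂ = g₃ ∧ u₁ + u₂ + u₃ = A g₁ then (A g₁ : ℂ)⁻¹ else 0 := by
  rw [der_pt_pt_pt, zero_add]
  by_cases hg : g₁ = g₂ ∧ g₂ = g₃
  · obtain ⟨rfl, rfl⟩ := hg
    rw [dfac_zero_triple, hcub.2 g₁ u₁ u₂ u₃ h₁ h₂ h₃]
    simp
  · rw [hcub.1 g₁ g₂ g₃ u₁ u₂ u₃ h₁ h₂ h₃ hg, mul_zero, if_neg (by tauto)]

lemma coeff_eq_zero_of_der_eq_zero {g₁ g₂ g₃ : Fin 3} {u₁ u₂ u₃ : ℕ} {β : Expv}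
    (h : der A c (.pt g₁ u₁) (.pt g₂ u₂) (.pt g₃ u₃) β 0 = 0) :
    c (β + e g₁ u₁ + e g₂ u₂ + e g₃ u₃) 0 = 0 := by
  rw [der_pt_pt_pt] at h
  exact (mul_eq_zero.1 h).resolve_left (Nat.cast_ne_zero.2 (dfac_pos _ _).ne')

lemma sum_pts_ite_eq (f : Fin 3 → ℕ → ℂ) (g : Fin 3) (k : ℕ) :
    ∑ i, ∑ j ∈ Finset.Icc 1 (A i - 1), (if i = g ∧ j = k then f i j else 0) =
      if 1 ≤ k ∧ k < A g then f g k else 0 := by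
  simp_rw [ite_and]
  rw [Fintype.sum_eq_single g fun i hi => Finset.sum_eq_zero fun j _ => if_neg hi]
  simp only [if_true, Finset.sum_ite_eq', Finset.mem_Icc]
  rw [← ite_and]
  exact if_congr (by omega) rfl rfl

lemma sum_der_zero_mul (hcub : CubicValues A c) {g₁ g₂ : Fin 3} {u v : ℕ}
    (hu : ValidPt A (g₁, u)) (hv : ValidPt A (g₂, v)) (f : Fin 3 → ℕ → ℂ) :
    ∑ i, ∑ j ∈ Finset.Icc 1 (A i - 1),
        (A i : ℂ) * der A c (.pt g₁ u) (.pt g₂ v) (.pt i j) 0 0 * f i j =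
      if g₁ = g₂ ∧ u + v < A g₁ then f g₁ (A g₁ - (u + v)) else 0 := by
  have hu₁ : 1 ≤ u := hu.1
  have hA : (A g₁ : ℂ) ≠ 0 := Nat.cast_ne_zero.2 (by have := hu.lt; omega)
  have hterm : ∀ i, ∀ j ∈ Finset.Icc 1 (A i - 1),
      (A i : ℂ) * der A c (.pt g₁ u) (.pt g₂ v) (.pt i j) 0 0 * f i j =
        if i = g₁ ∧ j = A g₁ - (u + v) then (if g₁ = g₂ then f i j else 0) else 0 := by
    intro i j hj
    rw [der_pt_pt_pt_zero hcub hu hv (Finset.mem_Icc.1 hj)]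
    rcases eq_or_ne g₁ g₂ with rfl | hg
    · rcases eq_or_ne i g₁ with rfl | hi
      · have hj₁ := (Finset.mem_Icc.1 hj).1
        have hk : u + v + j = A i ↔ j = A i - (u + v) := by omega
        simp [hk, hA]
      · simp [hi, Ne.symm hi]
    · simp [hg]
  rw [Finset.sum_congr rfl fun i _ => Finset.sum_congr rfl (hterm i), sum_pts_ite_eq]
  by_cases hg : g₁ = g₂ <;> simp only [hg, true_and, false_and, if_false, if_true, ite_self]
  exact if_congr (by omega) rfl rfl

lemma sum_mul_der_zero (hcub : CubicValues A c) {g₁ g₂ : Fin 3} {u v : ℕ}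
    (hu : ValidPt A (g₁, u)) (hv : ValidPt A (g₂, v)) (f : Fin 3 → ℕ → ℂ) :
    ∑ i, ∑ j ∈ Finset.Icc 1 (A i - 1),
        (A i : ℂ) * f i j * der A c (.pt i (A i - j)) (.pt g₁ u) (.pt g₂ v) 0 0 =
      if g₁ = g₂ ∧ u + v < A g₁ then f g₁ (u + v) else 0 := by
  have hu₁ : 1 ≤ u := hu.1
  have hterm : ∀ i, ∀ j ∈ Finset.Icc 1 (A i - 1),
      (A i : ℂ) * f i j * der A c (.pt i (A i - j)) (.pt g₁ u) (.pt g₂ v) 0 0 =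
        if i = g₁ ∧ j = u + v then (if g₁ = g₂ then f i j else 0) else 0 := by
    intro i j hj
    obtain ⟨hj₁, hj₂⟩ := Finset.mem_Icc.1 hj
    have hA : (A i : ℂ) ≠ 0 := Nat.cast_ne_zero.2 (by omega)
    rw [der_pt_pt_pt_zero hcub (show 1 ≤ A i - j ∧ A i - j ≤ A i - 1 by omega) hu hv]
    rcases eq_or_ne g₁ g₂ with rfl | hg
    · rcases eq_or_ne i g₁ with rfl | hi
      · have hk : A i - j + u + v = A i ↔ j = u + v := by omega
        simp [hk, mul_comm (A i : ℂ), hA]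
      · simp [hi]
    · simp [hg]
  rw [Finset.sum_congr rfl fun i _ => Finset.sum_congr rfl (hterm i), sum_pts_ite_eq]
  by_cases hg : g₁ = g₂ <;> simp only [hg, true_and, false_and, if_false, if_true, ite_self]
  exact if_congr (by omega) rfl rfl

lemma antidiagonal_e (i : Fin 3) (j : ℕ) :
    Finset.HasAntidiagonal.antidiagonal (e i j) = {(0, e i j), (e i j, 0)} := by
  rw [e, Finsupp.antidiagonal_single,
    show Finset.HasAntidiagonal.antidiagonal (1 : ℕ) = {(0, 1), (1, 0)} by decide]
  simp [Finset.map_insert]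

lemma quadTerm_pt_e (a₁ b₁ d₁ e₁ : Fin 3) (a₂ b₂ d₂ e₂ : ℕ) (k : Fin 3) (z : ℕ) :
    quadTerm A c (.pt a₁ a₂) (.pt b₁ b₂) (.pt d₁ d₂) (.pt e₁ e₂) (e k z) 0 =
      (∑ i, ∑ j ∈ Finset.Icc 1 (A i - 1),
        (A i : ℂ) * der A c (.pt a₁ a₂) (.pt b₁ b₂) (.pt i j) 0 0 *
          der A c (.pt i (A i - j)) (.pt d₁ d₂) (.pt e₁ e₂) (e k z) 0)
      + ∑ i, ∑ j ∈ Finset.Icc 1 (A i - 1),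
        (A i : ℂ) * der A c (.pt a₁ a₂) (.pt b₁ b₂) (.pt i j) (e k z) 0 *
          der A c (.pt i (A i - j)) (.pt d₁ d₂) (.pt e₁ e₂) 0 0 := by
  have hne : ((0 : Expv), e k z) ≠ (e k z, 0) := fun h =>
    Finsupp.single_ne_zero.2 one_ne_zero (congrArg Prod.fst h).symm
  rw [quadTerm, antidiagonal_e, Finset.Nat.antidiagonal_zero, Finset.sum_pair hne]
  simp only [Finset.sum_singleton, der_mu_pt_pt, der_pt_pt_mu, mul_zero, zero_mul, zero_add]

lemma coeff_eq_zero_of_le_add (hadm : IsAdmissible A c) (hcub : CubicValues A c)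
    {i₁ i₂ : Fin 3} (hne : i₁ ≠ i₂) {x y z p : ℕ} (hx : ValidPt A (i₁, x))
    (hy : ValidPt A (i₁, y)) (hz : ValidPt A (i₁, z)) (hp : ValidPt A (i₂, p)) (hp₂ : 2 ≤ p)
    (hxy : A i₁ ≤ x + y) :
    c (e i₁ x + e i₁ y + e i₁ z + e i₂ p) 0 = 0 := by
  have hpA := hp.lt
  have h₁ : ValidPt A (i₂, 1) := ⟨le_rfl, show 1 ≤ A i₂ - 1 by omega⟩
  have hp' : ValidPt A (i₂, p - 1) := ⟨show 1 ≤ p - 1 by omega, show p - 1 ≤ A i₂ - 1 by omega⟩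
  have hw := hadm.wdvv (.pt i₂ 1) (.pt i₂ (p - 1)) (.pt i₁ x) (.pt i₁ y) h₁ hp' hx hy
    (e i₁ z) (valid_e hz) 0
  rw [quadTerm_pt_e, quadTerm_pt_e, sum_der_zero_mul hcub h₁ hp', sum_mul_der_zero hcub hx hy,
    sum_der_zero_mul hcub h₁ hx, sum_mul_der_zero hcub hp' hy,
    if_pos ⟨rfl, by omega⟩, if_neg (by omega), if_neg (fun h => hne h.1.symm),
    if_neg (fun h => hne h.1.symm), show A i₂ - (A i₂ - (1 + (p - 1))) = p by omega] at hw
  simp only [add_zero] at hw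
  rw [show e i₁ x + e i₁ y + e i₁ z + e i₂ p = e i₁ z + e i₂ p + e i₁ x + e i₁ y by abel]
  exact coeff_eq_zero_of_der_eq_zero hw

lemma coeff_eq_zero_of_coeff_succ_pred_eq_zero (hadm : IsAdmissible A c)
    (hcub : CubicValues A c) {i₁ i₂ : Fin 3} (hne : i₁ ≠ i₂) {x y z p : ℕ}
    (hx : ValidPt A (i₁, x)) (hy : ValidPt A (i₁, y)) (hz : ValidPt A (i₁, z))
    (hp : ValidPt A (i₂, p)) (hz₂ : 2 ≤ z) (hx₁ : x + 1 < A i₁)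
    (hnext : c (e i₁ (x + 1) + e i₁ y + e i₁ (z - 1) + e i₂ p) 0 = 0) :
    c (e i₁ x + e i₁ y + e i₁ z + e i₂ p) 0 = 0 := by
  have hzA := hz.lt
  have h₁ : ValidPt A (i₁, 1) := ⟨le_rfl, show 1 ≤ A i₁ - 1 by omega⟩
  have hz' : ValidPt A (i₁, z - 1) := ⟨show 1 ≤ z - 1 by omega, show z - 1 ≤ A i₁ - 1 by omega⟩
  have hnext' : der A c (.pt i₁ (x + 1)) (.pt i₁ (z - 1)) (.pt i₂ p) (e i₁ y) 0 = 0 := by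
    rw [der_pt_pt_pt, show e i₁ y + e i₁ (x + 1) + e i₁ (z - 1) + e i₂ p =
      e i₁ (x + 1) + e i₁ y + e i₁ (z - 1) + e i₂ p by abel, hnext, mul_zero]
  have hw := hadm.wdvv (.pt i₁ 1) (.pt i₁ (z - 1)) (.pt i₁ x) (.pt i₂ p) h₁ hz' hx hp
    (e i₁ y) (valid_e hy) 0
  rw [quadTerm_pt_e, quadTerm_pt_e, sum_der_zero_mul hcub h₁ hz', sum_mul_der_zero hcub hx hp,
    sum_der_zero_mul hcub h₁ hx, sum_mul_der_zero hcub hz' hp,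
    if_pos ⟨rfl, by omega⟩, if_neg (fun h => hne h.1), if_pos ⟨rfl, by omega⟩,
    if_neg (fun h => hne h.1), show A i₁ - (A i₁ - (1 + (z - 1))) = z by omega,
    show A i₁ - (A i₁ - (1 + x)) = x + 1 by omega, hnext'] at hw
  simp only [add_zero] at hw
  rw [show e i₁ x + e i₁ y + e i₁ z + e i₂ p = e i₁ y + e i₁ z + e i₁ x + e i₂ p by abel]
  exact coeff_eq_zero_of_der_eq_zero hw

lemma lt_add_add_of_coeff_ne_zero (hadm : IsAdmissible A c) {i₁ i₂ : Fin 3} {x y z p : ℕ}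
    (hx : ValidPt A (i₁, x)) (hy : ValidPt A (i₁, y)) (hz : ValidPt A (i₁, z))
    (hp : ValidPt A (i₂, p)) (h : c (e i₁ x + e i₁ y + e i₁ z + e i₂ p) 0 ≠ 0) :
    A i₁ < x + y + z := by
  have hdeg := hadm.homog _ ((((valid_e hx).add (valid_e hy)).add (valid_e hz)).add
    (valid_e hp)) 0 h
  simp only [deg_add, deg_e, Nat.cast_zero, zero_mul, add_zero] at hdeg
  have hA₁ : (0 : ℚ) < A i₁ := Nat.cast_pos.2 (Nat.zero_lt_of_lt hx.lt)
  have hA₂ : (0 : ℚ) < A i₂ := Nat.cast_pos.2 (Nat.zero_lt_of_lt hp.lt)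
  have hpA : (p : ℚ) < A i₂ := by exact_mod_cast hp.lt
  have hsum : ((x + y + z : ℕ) : ℚ) * A i₂ = A i₁ * (2 * A i₂ - p) := by
    field_simp at hdeg
    push_cast
    linarith
  have : (A i₁ : ℚ) * A i₂ < ((x + y + z : ℕ) : ℚ) * A i₂ := by
    rw [hsum]
    nlinarith
  exact_mod_cast lt_of_mul_lt_mul_right this hA₂.le

theorem coeff_quartic_eq_zero (hadm : IsAdmissible A c) (hcub : CubicValues A c) {i₁ i₂ : Fin 3}
    (hne : i₁ ≠ i₂) {p : ℕ} (hp : ValidPt A (i₂, p)) (hp₂ : 2 ≤ p) {x y z : ℕ}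
    (hx : ValidPt A (i₁, x)) (hy : ValidPt A (i₁, y)) (hz : ValidPt A (i₁, z)) :
    c (e i₁ x + e i₁ y + e i₁ z + e i₂ p) 0 = 0 := by
  induction z using Nat.strong_induction_on generalizing x with
  | _ z ih =>
    by_cases hxy : A i₁ ≤ x + y
    · exact coeff_eq_zero_of_le_add hadm hcub hne hx hy hz hp hp₂ hxy
    by_contra hc
    have hxyz := lt_add_add_of_coeff_ne_zero hadm hx hy hz hp hc
    have hy₁ : 1 ≤ y := hy.1
    have hzA := hz.lt
    have hz' : ValidPt A (i₁, z - 1) := ⟨show 1 ≤ z - 1 by omega, show z - 1 ≤ A i₁ - 1 by omega⟩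
    have hx' : ValidPt A (i₁, x + 1) := ⟨by omega, show x + 1 ≤ A i₁ - 1 by omega⟩
    exact hc (coeff_eq_zero_of_coeff_succ_pred_eq_zero hadm hcub hne hx hy hz hp (by omega)
      (by omega) (ih (z - 1) (by omega) hx' hz'))

end Coefficients

theorem step1_iii_case1_general (A : Fin 3 → ℕ)
    (c : Expv → ℕ → ℂ) (hadm : IsAdmissible A c) (hcub : CubicValues A c)
    (i₁ i₂ : Fin 3) (hne : i₁ ≠ i₂) (j₁ j₁' j₁'' j₂ : ℕ)
    (hv₁ : ValidPt A (i₁, j₁)) (hv₁' : ValidPt A (i₁, j₁'))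
    (hv₁'' : ValidPt A (i₁, j₁'')) (hv₂ : ValidPt A (i₂, j₂))
    (hj₂ : 2 ≤ j₂) :
    c (e i₁ j₁ + e i₁ j₁' + e i₁ j₁'' + e i₂ j₂) 0 = 0 :=
  coeff_quartic_eq_zero hadm hcub hne hv₂ hj₂ hv₁ hv₁' hv₁''

/-- Sub-Lemma (Step 1-(iii), Case 1). -/
theorem step1_iii_case1 (A : Fin 3 → ℕ) (hA : ∀ i, 1 ≤ A i) (hA01 : A 0 ≤ A 1) (hA12 : A 1 ≤ A 2)
    (c : Expv → ℕ → ℂ) (hadm : IsAdmissible A c) (hcub : CubicValues A c)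
    (i₁ i₂ : Fin 3) (hne : i₁ ≠ i₂) (j₁ j₁' j₁'' j₂ : ℕ)
    (hv₁ : ValidPt A (i₁, j₁)) (hv₁' : ValidPt A (i₁, j₁'))
    (hv₁'' : ValidPt A (i₁, j₁'')) (hv₂ : ValidPt A (i₂, j₂))
    (ha₁ : 3 ≤ A i₁) (ha₂ : 3 ≤ A i₂) (hj₁' : 2 ≤ j₁') (hj₂ : 2 ≤ j₂) :
    c (e i₁ j₁ + e i₁ j₁' + e i₁ j₁'' + e i₂ j₂) 0 = 0 :=
  step1_iii_case1_general A c hadm hcub i₁ i₂ hne j₁ j₁' j₁'' j₂ hv₁ hv₁' hv₁'' hv₂ hj₂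

end FrobeniusUniqueness
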